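/- Let G be a Deza graph with parameters (n,k,b,a), b > a, and let M, A, B be the adjacency matrices of G and of its children G_A and G_B respectively. If θ₁ = k, θ₂, …, θₙ are the eigenvalues of M (listed with multiplicity), then the eigenvalues of A are (b(n−1) − k(k−1))/(b−a) together with (k − b − θᵢ²)/(b−a) for i = 2, …, n, and the eigenvalues of B are (a(n−1) − k(k−1))/(a−b) together with (k − a − θᵢ²)/(a−b) for i = 2, …, n. -/

import Mathlib

open scoped Classical

noncomputable section

namespace DezaPaper

open SimpleGraph

variable {V : Type*}

/-- `G` is `k`-regular: every vertex has exactly `k` neighbours. -/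
def IsRegular (G : SimpleGraph V) (k : ℕ) : Prop :=
  ∀ v, Nat.card (G.neighborSet v) = k

/-- `G` is a Deza graph with parameters `(n, k, b, a)`:  a `k`-regular graph on `n`
vertices, not complete and not edgeless, in which every pair of distinct vertices has
`b` or `a` common neighbours, where `a ≤ b`. -/
def IsDezaWith (G : SimpleGraph V) (n k b a : ℕ) : Prop :=
  Nat.card V = n ∧ IsRegular G k ∧ a ≤ b ∧ G ≠ ⊤ ∧ G ≠ ⊥ ∧
    ∀ u v : V, u ≠ v →
      Nat.card (G.commonNeighbors u v) = b ∨ Nat.card (G.commonNeighbors u v) = a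

/-- The child of `G` associated with the value `c`: two distinct vertices are adjacent
iff they have exactly `c` common neighbours in `G`.  (For a Deza graph with parameters
`(n,k,b,a)`, `child G a` is the child `G_A` and `child G b` is the child `G_B`.) -/
def child (G : SimpleGraph V) (c : ℕ) : SimpleGraph V where
  Adj u v := u ≠ v ∧ Nat.card (G.commonNeighbors u v) = c
  symm := ⟨by
    rintro u v ⟨h1, h2⟩
    refine ⟨h1.symm, ?_⟩
    rwa [SimpleGraph.commonNeighbors_symm]⟩
  loopless := ⟨fun v h => h.1 rfl⟩

/-- `G` is a strongly regular graph with parameters `(n, k, l, m)`:  a `k`-regular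
graph on `n` vertices, not complete and not edgeless, any two adjacent vertices have
`l` common neighbours and any two distinct non-adjacent vertices have `m` common
neighbours. -/
def IsSRGraphWith (G : SimpleGraph V) (n k l m : ℕ) : Prop :=
  Nat.card V = n ∧ IsRegular G k ∧ G ≠ ⊤ ∧ G ≠ ⊥ ∧
    (∀ u v, G.Adj u v → Nat.card (G.commonNeighbors u v) = l) ∧
    (∀ u v, u ≠ v → ¬G.Adj u v → Nat.card (G.commonNeighbors u v) = m)

/-- `G` is a strongly Deza graph with parameters `(n, k, b, a)`: a Deza graph with
`b > a` whose two children are strongly regular graphs. -/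
def IsStronglyDezaWith (G : SimpleGraph V) (n k b a : ℕ) : Prop :=
  IsDezaWith G n k b a ∧ a < b ∧
    (∃ k' l' m', IsSRGraphWith (child G a) n k' l' m') ∧
    (∃ k' l' m', IsSRGraphWith (child G b) n k' l' m')

/-- The real adjacency matrix of `G`. -/
def adjMat [Fintype V] [DecidableEq V] (G : SimpleGraph V) : Matrix V V ℝ :=
  Matrix.of fun u v => if G.Adj u v then (1 : ℝ) else 0

/-- The spectrum of `G`: the multiset of real eigenvalues (with multiplicity) of its
real adjacency matrix, i.e. the roots of its characteristic polynomial. -/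
def spectrum [Fintype V] [DecidableEq V] (G : SimpleGraph V) : Multiset ℝ :=
  (adjMat G).charpoly.roots

/-- `G` is integral: all its eigenvalues are integers. -/
def IsIntegral [Fintype V] [DecidableEq V] (G : SimpleGraph V) : Prop :=
  ∀ θ ∈ spectrum G, ∃ t : ℤ, θ = (t : ℝ)

/-- `G` is bipartite. -/
def IsBipartiteGraph (G : SimpleGraph V) : Prop :=
  ∃ s : Set V, ∀ u v, G.Adj u v → (u ∈ s ↔ v ∉ s)

/-- The distance-`i` graph of `G`: two vertices are adjacent iff they are at
distance `i` in `G`. -/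
def distGraph (G : SimpleGraph V) (i : ℕ) : SimpleGraph V where
  Adj u v := u ≠ v ∧ G.dist u v = i
  symm := ⟨by
    rintro u v ⟨h1, h2⟩
    exact ⟨h1.symm, by rwa [SimpleGraph.dist_comm]⟩⟩
  loopless := ⟨fun v h => h.1 rfl⟩

/-- `G` is a distance-regular graph of diameter `d` with intersection numbers
`ia i`, `ib i`, `ic i`. -/
def IsDRGWith (G : SimpleGraph V) (d : ℕ) (ia ib ic : ℕ → ℕ) : Prop :=
  G.Connected ∧ (∃ u v : V, G.dist u v = d) ∧ (∀ u v : V, G.dist u v ≤ d) ∧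
    ∀ i ≤ d, ∀ u v : V, G.dist u v = i →
      Nat.card {w : V | G.Adj v w ∧ G.dist u w = i + 1} = ib i ∧
      Nat.card {w : V | G.Adj v w ∧ G.dist u w = i} = ia i ∧
      (1 ≤ i → Nat.card {w : V | G.Adj v w ∧ G.dist u w = i - 1} = ic i)

/-- The complete multipartite graph with `t` parts of size `m`. -/
def completeMultipartite (t m : ℕ) : SimpleGraph (Fin t × Fin m) where
  Adj u v := u.1 ≠ v.1
  symm := ⟨fun _ _ h => h.symm⟩
  loopless := ⟨fun _ h => h rfl⟩

/-- `H` is a complete multipartite graph with parts of equal size. -/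
def IsCompleteMultipartiteEq (H : SimpleGraph V) : Prop :=
  ∃ t m : ℕ, Nonempty (H ≃g completeMultipartite t m)

/-- `G` is a divisible design graph with parameters `(n, k, b, a)`: a Deza graph whose
children are a complete multipartite graph with parts of equal size and its
complement. -/
def IsDDGWith (G : SimpleGraph V) (n k b a : ℕ) : Prop :=
  IsDezaWith G n k b a ∧ a < b ∧
    ((IsCompleteMultipartiteEq (child G a) ∧ child G b = (child G a)ᶜ) ∨
     (IsCompleteMultipartiteEq (child G b) ∧ child G a = (child G b)ᶜ))

/-! Since `M²` counts common neighbours, `(a - b) A = M² - (k - b) I - b J` with `J` the all-ones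
matrix, and symmetrically for `B`. The symmetric matrix `M` has the all-ones vector `1` as an
eigenvector for `k`, so `M² - (k - b) I` has the eigenvalues `k² - k + b` and `θᵢ² - k + b`, and
the rank-one term `- b J` shifts only the eigenvalue belonging to `1`, by `- b n`. That rank-one
step is the matrix determinant lemma for an eigenvector, `det (P - u vᵀ) μ = det P (μ - v ⬝ u)`
whenever `P u = μ u`, which holds without `P` being invertible. -/

section

open Matrix Polynomial

theorem _root_.Matrix.det_sub_vecMulVec_mul_of_mulVec_eq_smul {n R : Type*} [Fintype n]
    [DecidableEq n] [CommRing R] {A : Matrix n n R} {u v : n → R} {μ : R} (h : A *ᵥ u = μ • u) :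
    (A - vecMulVec u v).det * μ = A.det * (μ - v ⬝ᵥ u) := by
  -- the column operation `fromBlocks 1 u 0 (-μ)` makes `fromBlocks A u vᵀ 1` block triangular
  have hprod : fromBlocks A (replicateCol Unit u) (replicateRow Unit v) 1 *
        fromBlocks 1 (replicateCol Unit u) 0 (-μ • 1) =
      fromBlocks A 0 (replicateRow Unit v) ((v ⬝ᵥ u - μ) • 1) := by
    rw [fromBlocks_multiply, ← replicateCol_mulVec, h]
    congr 1 <;> ext <;> simp [sub_eq_add_neg]
  have hdet := congrArg det hprod
  rw [det_mul, det_fromBlocks_one₂₂, det_fromBlocks_zero₂₁, det_fromBlocks_zero₁₂,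
    ← vecMulVec_eq] at hdet
  simp only [det_one, one_mul, det_smul, Fintype.card_unit, pow_one, mul_one] at hdet
  linear_combination -hdet

theorem _root_.Matrix.charpoly_add_vecMulVec_mul_of_mulVec_eq_smul {n R : Type*} [Fintype n]
    [DecidableEq n] [CommRing R] {N : Matrix n n R} {u v : n → R} {θ : R}
    (h : N *ᵥ u = θ • u) :
    (N + vecMulVec u v).charpoly * (X - C θ) = N.charpoly * (X - C (θ + v ⬝ᵥ u)) := by
  have hchar : (N + vecMulVec u v).charmatrix = N.charmatrix - vecMulVec (C ∘ u) (C ∘ v) := by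
    ext i j
    simp [charmatrix, vecMulVec_apply, sub_add_eq_sub_sub]
  have hu : N.charmatrix *ᵥ (C ∘ u) = (X - C θ) • (C ∘ u) := by
    ext i
    have hi := congrArg C (congrFun h i)
    rw [RingHom.map_mulVec] at hi
    simp [charmatrix, sub_mulVec, hi, sub_mul]
  have hdot : (C ∘ v) ⬝ᵥ (C ∘ u) = C (v ⬝ᵥ u) := by simp [dotProduct, map_sum]
  rw [charpoly, hchar, det_sub_vecMulVec_mul_of_mulVec_eq_smul hu, hdot, charpoly, C_add]
  ring

theorem _root_.Matrix.IsHermitian.roots_charpoly_aeval {n : Type*} [Fintype n] [DecidableEq n]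
    {M : Matrix n n ℝ} (hM : M.IsHermitian) (p : ℝ[X]) :
    (aeval M p).charpoly.roots = M.charpoly.roots.map p.eval := by
  rw [← cfc_polynomial p M hM.isSelfAdjoint, hM.charpoly_cfc_eq,
    hM.roots_charpoly_eq_eigenvalues, roots_prod]
  · simp
  · simp [Finset.prod_ne_zero_iff, X_sub_C_ne_zero]

theorem _root_.Matrix.roots_charpoly_add_vecMulVec_of_mulVec_eq_smul {n K : Type*} [Fintype n]
    [DecidableEq n] [Field K] {N : Matrix n n K} {u v : n → K} {θ : K} {s : Multiset K}
    (h : N *ᵥ u = θ • u) (hN : N.charpoly.roots = θ ::ₘ s) :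
    (N + vecMulVec u v).charpoly.roots = (θ + v ⬝ᵥ u) ::ₘ s := by
  have hroots := congrArg roots (charpoly_add_vecMulVec_mul_of_mulVec_eq_smul (v := v) h)
  rw [roots_mul ((charpoly_monic _).mul (monic_X_sub_C _)).ne_zero,
    roots_mul ((charpoly_monic _).mul (monic_X_sub_C _)).ne_zero, roots_X_sub_C, roots_X_sub_C,
    hN] at hroots
  rw [← add_left_inj {θ}, hroots, ← Multiset.singleton_add, ← Multiset.singleton_add]
  abel

lemma adjMat_eq_adjMatrix [Fintype V] [DecidableEq V] (G : SimpleGraph V) :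
    adjMat G = G.adjMatrix ℝ := rfl

lemma adjMat_isHermitian [Fintype V] [DecidableEq V] (G : SimpleGraph V) :
    (adjMat G).IsHermitian :=
  G.isHermitian_adjMatrix ℝ

lemma IsRegular.isRegularOfDegree [Fintype V] {G : SimpleGraph V} {k : ℕ} (h : IsRegular G k) :
    G.IsRegularOfDegree k := fun v => by
  rw [← card_neighborSet_eq_degree, ← Nat.card_eq_fintype_card, h v]

lemma adjMat_mulVec_one [Fintype V] [DecidableEq V] {G : SimpleGraph V} {k : ℕ}
    (h : IsRegular G k) : adjMat G *ᵥ 1 = (k : ℝ) • 1 := by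
  ext v
  simp [adjMat_eq_adjMatrix, h.isRegularOfDegree v]

lemma adjMat_mul_self_apply [Fintype V] [DecidableEq V] (G : SimpleGraph V) (u v : V) :
    (adjMat G * adjMat G) u v = Nat.card (G.commonNeighbors u v) := by
  rw [adjMat_eq_adjMatrix, ← sq, adjMatrix_pow_apply_eq_card_walk, ← Nat.card_eq_fintype_card]
  exact congrArg _ (Nat.card_congr (G.walkLengthTwoEquivCommonNeighbors u v))

lemma smul_adjMat_child [Fintype V] [DecidableEq V] {G : SimpleGraph V} {k c d : ℕ}
    (hreg : IsRegular G k)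
    (hcn : ∀ u v : V, u ≠ v →
      Nat.card (G.commonNeighbors u v) = c ∨ Nat.card (G.commonNeighbors u v) = d) :
    ((c : ℝ) - d) • adjMat (child G c) =
      adjMat G * adjMat G - ((k : ℝ) - d) • 1 - (d : ℝ) • vecMulVec 1 1 := by
  ext u v
  have hchild : adjMat (child G c) u v =
      if u ≠ v ∧ Nat.card (G.commonNeighbors u v) = c then 1 else 0 := by
    simp only [adjMat, Matrix.of_apply]
    congr
  simp only [Matrix.smul_apply, Matrix.sub_apply, adjMat_mul_self_apply, hchild]
  obtain rfl | huv := eq_or_ne u v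
  · rw [commonNeighbors, Set.inter_self, hreg u]
    simp
  · obtain h | h := hcn u v huv <;> rw [h]
    · simp [huv]
    · by_cases hdc : d = c <;> simp [huv, hdc]

theorem spectrum_child_eq [Fintype V] [DecidableEq V] {G : SimpleGraph V} {n k c d : ℕ}
    {T : Multiset ℝ} (hV : Nat.card V = n) (hreg : IsRegular G k) (hcd : c ≠ d)
    (hcn : ∀ u v : V, u ≠ v →
      Nat.card (G.commonNeighbors u v) = c ∨ Nat.card (G.commonNeighbors u v) = d)
    (hspec : spectrum G = {(k : ℝ)} + T) :
    spectrum (child G c) =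
      {((d : ℝ) * ((n : ℝ) - 1) - (k : ℝ) * ((k : ℝ) - 1)) / ((d : ℝ) - (c : ℝ))} +
        T.map (fun th => ((k : ℝ) - (d : ℝ) - th ^ 2) / ((d : ℝ) - (c : ℝ))) := by
  have hcd' : (c : ℝ) - d ≠ 0 := sub_ne_zero.mpr (Nat.cast_injective.ne hcd)
  have hdc' : (d : ℝ) - c ≠ 0 := sub_ne_zero.mpr (Nat.cast_injective.ne hcd.symm)
  set M := adjMat G
  set N := ((c : ℝ) - d)⁻¹ • (M * M - ((k : ℝ) - d) • 1)
  have hA : adjMat (child G c) = N + vecMulVec 1 (fun _ => (d : ℝ) / (d - c)) := by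
    rw [← inv_smul_smul₀ hcd' (adjMat _), smul_adjMat_child hreg hcn]
    ext u v
    simp only [N, vecMulVec, smul_of, Matrix.smul_apply, Matrix.sub_apply, Matrix.add_apply,
      of_apply, Pi.one_apply, Pi.smul_apply, smul_eq_mul, one_mul, mul_one]
    field_simp
    ring
  have hM1 : M *ᵥ 1 = (k : ℝ) • 1 := adjMat_mulVec_one hreg
  have hN1 : N *ᵥ 1 = (((c : ℝ) - d)⁻¹ * (k ^ 2 - (k - d))) • 1 := by
    simp only [N, smul_mulVec, sub_mulVec, ← mulVec_mulVec, hM1, mulVec_smul,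
      one_mulVec, smul_smul, ← sub_smul, sq]
  have hNroots : N.charpoly.roots = ((c : ℝ) - d)⁻¹ * (k ^ 2 - (k - d)) ::ₘ
      T.map (fun θ => ((c : ℝ) - d)⁻¹ * (θ ^ 2 - (k - d))) := by
    have hNp : N = aeval M (C ((c : ℝ) - d)⁻¹ * (X ^ 2 - C ((k : ℝ) - d))) := by
      simp only [N, sq, map_mul, map_sub, aeval_C, aeval_X, Algebra.algebraMap_eq_smul_one,
        smul_mul_assoc, one_mul, sub_smul]
    unfold spectrum at hspec
    rw [hNp, (adjMat_isHermitian G).roots_charpoly_aeval, hspec]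
    simp
  rw [spectrum, hA, roots_charpoly_add_vecMulVec_of_mulVec_eq_smul hN1 hNroots,
    ← Multiset.singleton_add]
  have hcard : Fintype.card V = n := Nat.card_eq_fintype_card.symm.trans hV
  congr 1
  · rw [Multiset.singleton_inj]
    simp only [dotProduct_one, Finset.sum_const, Finset.card_univ, hcard, nsmul_eq_mul]
    field_simp
    ring
  · refine Multiset.map_congr rfl fun θ _ => ?_
    field_simp
    ring

end

theorem deza_children_spectrum_general [Fintype V] [DecidableEq V]
    (G : SimpleGraph V) (n k b a : ℕ)
    (hdeza : IsDezaWith G n k b a) (hba : a < b)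
    (T : Multiset ℝ)
    (hspec : spectrum G = {(k : ℝ)} + T) :
    spectrum (child G a) =
      {((b : ℝ) * ((n : ℝ) - 1) - (k : ℝ) * ((k : ℝ) - 1)) / ((b : ℝ) - (a : ℝ))} +
        T.map (fun th => ((k : ℝ) - (b : ℝ) - th ^ 2) / ((b : ℝ) - (a : ℝ))) ∧
    spectrum (child G b) =
      {((a : ℝ) * ((n : ℝ) - 1) - (k : ℝ) * ((k : ℝ) - 1)) / ((a : ℝ) - (b : ℝ))} +
        T.map (fun th => ((k : ℝ) - (a : ℝ) - th ^ 2) / ((a : ℝ) - (b : ℝ))) := by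
  obtain ⟨hV, hreg, -, -, -, hcn⟩ := hdeza
  exact ⟨spectrum_child_eq hV hreg hba.ne (fun u v huv => (hcn u v huv).symm) hspec,
    spectrum_child_eq hV hreg hba.ne' hcn hspec⟩

/-- Let `G` be a Deza graph with parameters `(n,k,b,a)`, `b > a`.
If `θ₁ = k, θ₂, …, θₙ` are the eigenvalues of the adjacency matrix of `G`, then the
eigenvalues of the child `G_A` are `(b(n-1) - k(k-1))/(b-a)` together with
`(k - b - θᵢ²)/(b-a)` for `i = 2, …, n`, and the eigenvalues of the child `G_B` are
`(a(n-1) - k(k-1))/(a-b)` together with `(k - a - θᵢ²)/(a-b)` for `i = 2, …, n`. -/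
theorem deza_children_spectrum [Fintype V] [DecidableEq V]
    (G : SimpleGraph V) (n k b a : ℕ)
    (hdeza : IsDezaWith G n k b a) (hba : a < b)
    (T : Multiset ℝ) (hT : Multiset.card T = n - 1)
    (hspec : spectrum G = {(k : ℝ)} + T) :
    spectrum (child G a) =
      {((b : ℝ) * ((n : ℝ) - 1) - (k : ℝ) * ((k : ℝ) - 1)) / ((b : ℝ) - (a : ℝ))} +
        T.map (fun th => ((k : ℝ) - (b : ℝ) - th ^ 2) / ((b : ℝ) - (a : ℝ))) ∧
    spectrum (child G b) =
      {((a : ℝ) * ((n : ℝ) - 1) - (k : ℝ) * ((k : ℝ) - 1)) / ((a : ℝ) - (b : ℝ))} +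
        T.map (fun th => ((k : ℝ) - (a : ℝ) - th ^ 2) / ((a : ℝ) - (b : ℝ))) :=
  deza_children_spectrum_general G n k b a hdeza hba T hspec

end DezaPaper
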